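/- arXiv:0811.3365 — 3 statements merged into one kernel-verified Lean document; each statement's English description precedes it below -/
import Mathlib

section
/- For every compactly supported continuous function φ : ℝ → ℝ, the limit as n → ∞ of (1/n) · ∫_ℝ (d²/dx²) [log(∑_{j=0}^n e^{jx})] · φ(x) dx equals φ(0). -/
open MeasureTheory Filter Finset Real Topology

/-!
`F_n''` is the variance of `j` under the probability weights on `{0, …, n}` proportional to
`e^{jx}`, so it is a nonnegative kernel whose primitive is the mean `F_n'`, which increases from
`0` to `n`. The reflection `j ↦ n - j` gives `F_n'(x) + F_n'(-x) = n`, and `F_n'(x)` stays bounded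
for `x < 0` (it is at most `∑ j e^{jx}`); hence `F_n'/n` tends to `0` on `x < 0` and to `1` on
`x > 0`. Nonnegative kernels whose primitives converge to the Heaviside function concentrate at
the origin, which gives the limit `φ 0`.
-/

section ApproximateIdentity

lemma abs_intervalIntegral_mul_le_of_hasDerivAt {k g ψ : ℝ → ℝ} {a b c : ℝ}
    (hg : ∀ x, HasDerivAt g (k x) x) (hk : Continuous k) (hk0 : ∀ x, 0 ≤ k x)
    (hab : a ≤ b) (hψc : ∀ x ∈ Set.Icc a b, |ψ x| ≤ c) :
    |∫ x in a..b, k x * ψ x| ≤ c * (g b - g a) := by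
  calc |∫ x in a..b, k x * ψ x| ≤ ∫ x in a..b, c * k x := by
        rw [← Real.norm_eq_abs]
        refine intervalIntegral.norm_integral_le_of_norm_le (μ := volume) hab
          (ae_of_all _ fun x hx => ?_) ((continuous_const.mul hk).intervalIntegrable a b)
        rw [Real.norm_eq_abs, abs_mul, abs_of_nonneg (hk0 x), mul_comm]
        exact mul_le_mul_of_nonneg_right (hψc x (Set.Ioc_subset_Icc_self hx)) (hk0 x)
    _ = c * (g b - g a) := by
        rw [intervalIntegral.integral_const_mul,
          intervalIntegral.integral_eq_sub_of_hasDerivAt (fun x _ => hg x)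
            (hk.intervalIntegrable a b)]

variable {ι : Type*} {l : Filter ι} {k g : ι → ℝ → ℝ}

lemma tendsto_intervalIntegral_mul_of_apply_zero_eq_zero
    (hg : ∀ i x, HasDerivAt (g i) (k i x) x) (hk : ∀ i, Continuous (k i))
    (hk0 : ∀ i x, 0 ≤ k i x) (hneg : ∀ x < 0, Tendsto (g · x) l (𝓝 0))
    (hpos : ∀ x > 0, Tendsto (g · x) l (𝓝 1)) {ψ : ℝ → ℝ} (hψ : Continuous ψ)
    (hψ0 : ψ 0 = 0) {a b : ℝ} (ha : a < 0) (hb : 0 < b) :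
    Tendsto (fun i => ∫ x in a..b, k i x * ψ x) l (𝓝 0) := by
  rw [Metric.tendsto_nhds]
  intro ε hε
  obtain ⟨δ₀, hδ₀, hψδ₀⟩ :=
    Metric.continuousAt_iff.mp hψ.continuousAt (ε / 2) (half_pos hε)
  set δ := min (δ₀ / 2) (min (-a) b)
  have hδ : 0 < δ := lt_min (half_pos hδ₀) (lt_min (neg_pos.2 ha) hb)
  have haδ : a ≤ -δ := le_neg.2 ((min_le_right _ _).trans (min_le_left _ _))
  have hδb : δ ≤ b := (min_le_right _ _).trans (min_le_right _ _)
  have hψδ : ∀ x ∈ Set.Icc (-δ) δ, |ψ x| ≤ ε / 2 := fun x hx => by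
    have hxδ₀ : dist x 0 < δ₀ := by
      rw [Real.dist_0_eq_abs]
      exact (abs_le.2 hx).trans_lt ((min_le_left _ _).trans_lt (half_lt_self hδ₀))
    simpa [hψ0] using (hψδ₀ hxδ₀).le
  obtain ⟨M, hM⟩ :=
    (isCompact_Icc (a := a) (b := b)).exists_bound_of_continuousOn hψ.continuousOn
  have hψM : ∀ {u v}, Set.Icc u v ⊆ Set.Icc a b → ∀ x ∈ Set.Icc u v, |ψ x| ≤ M :=
    fun huv x hx => hM x (huv hx)
  have hbound : ∀ i, |∫ x in a..b, k i x * ψ x| ≤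
      M * (g i (-δ) - g i a) + ε / 2 * (g i δ - g i (-δ)) + M * (g i b - g i δ) := by
    intro i
    have hint : ∀ u v, IntervalIntegrable (fun x => k i x * ψ x) volume u v :=
      fun u v => ((hk i).mul hψ).intervalIntegrable u v
    rw [← intervalIntegral.integral_add_adjacent_intervals (hint a (-δ)) (hint (-δ) b),
      ← intervalIntegral.integral_add_adjacent_intervals (hint (-δ) δ) (hint δ b),
      ← add_assoc]
    refine (abs_add_le _ _).trans (add_le_add ((abs_add_le _ _).trans (add_le_add ?_ ?_)) ?_)
    · exact abs_intervalIntegral_mul_le_of_hasDerivAt (hg i) (hk i) (hk0 i) haδ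
        (hψM (Set.Icc_subset_Icc_right (by linarith)))
    · exact abs_intervalIntegral_mul_le_of_hasDerivAt (hg i) (hk i) (hk0 i) (by linarith) hψδ
    · exact abs_intervalIntegral_mul_le_of_hasDerivAt (hg i) (hk i) (hk0 i) hδb
        (hψM (Set.Icc_subset_Icc_left (by linarith)))
  have hlim : Tendsto (fun i =>
      M * (g i (-δ) - g i a) + ε / 2 * (g i δ - g i (-δ)) + M * (g i b - g i δ))
      l (𝓝 (ε / 2)) := by
    have hδ' : -δ < 0 := neg_neg_of_pos hδ
    simpa using ((((hneg _ hδ').sub (hneg a ha)).const_mul M).add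
      (((hpos δ hδ).sub (hneg _ hδ')).const_mul (ε / 2))).add
      (((hpos b hb).sub (hpos δ hδ)).const_mul M)
  filter_upwards [hlim.eventually (gt_mem_nhds (half_lt_self hε))] with i hi
  rw [Real.dist_0_eq_abs]
  exact (hbound i).trans_lt hi

theorem tendsto_integral_mul_of_hasDerivAt
    (hg : ∀ i x, HasDerivAt (g i) (k i x) x) (hk : ∀ i, Continuous (k i))
    (hk0 : ∀ i x, 0 ≤ k i x) (hneg : ∀ x < 0, Tendsto (g · x) l (𝓝 0))
    (hpos : ∀ x > 0, Tendsto (g · x) l (𝓝 1)) {φ : ℝ → ℝ} (hφ : Continuous φ)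
    (hφs : HasCompactSupport φ) :
    Tendsto (fun i => ∫ x, k i x * φ x) l (𝓝 (φ 0)) := by
  obtain ⟨R, hR, hφR⟩ := hφs.isBounded.subset_ball_lt 0 0
  have hφR' : Function.support φ ⊆ Set.Ioc (-R) R := by
    refine (subset_tsupport φ).trans (hφR.trans ?_)
    rw [Real.ball_eq_Ioo, zero_sub, zero_add]
    exact Set.Ioo_subset_Ioc_self
  have hsplit : ∀ i, ∫ x, k i x * φ x =
      (∫ x in -R..R, k i x * (φ x - φ 0)) + φ 0 * (g i R - g i (-R)) := by
    intro i
    rw [← intervalIntegral.integral_eq_integral_of_support_subset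
      ((Function.support_mul_subset_right _ _).trans hφR')]
    simp only [mul_sub (k i _)]
    have hint : ∀ f : ℝ → ℝ, Continuous f →
        IntervalIntegrable (fun x => k i x * f x) volume (-R) R :=
      fun f hf => ((hk i).mul hf).intervalIntegrable _ _
    rw [intervalIntegral.integral_sub (hint φ hφ) (hint _ continuous_const),
      intervalIntegral.integral_mul_const,
      intervalIntegral.integral_eq_sub_of_hasDerivAt (fun x _ => hg i x)
        ((hk i).intervalIntegrable _ _)]
    ring
  simp only [hsplit]
  simpa using (tendsto_intervalIntegral_mul_of_apply_zero_eq_zero hg hk hk0 hneg hpos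
    (hφ.sub continuous_const) (sub_self _) (neg_neg_of_pos hR) hR).add
    (((hpos R hR).sub (hneg _ (neg_neg_of_pos hR))).const_mul (φ 0))

end ApproximateIdentity

section LogSumExp

variable {ι : Type*} (s : Finset ι) (a : ι → ℝ)

noncomputable def expMoment (m : ℕ) (x : ℝ) : ℝ := ∑ i ∈ s, a i ^ m * exp (a i * x)

noncomputable def expMean (x : ℝ) : ℝ := expMoment s a 1 x / expMoment s a 0 x

noncomputable def expVariance (x : ℝ) : ℝ :=
  (expMoment s a 2 x * expMoment s a 0 x - expMoment s a 1 x * expMoment s a 1 x) /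
    expMoment s a 0 x ^ 2

variable {s a}

lemma expMoment_zero_eq (x : ℝ) : expMoment s a 0 x = ∑ i ∈ s, exp (a i * x) := by
  simp [expMoment]

lemma expMoment_zero_pos (hs : s.Nonempty) (x : ℝ) : 0 < expMoment s a 0 x := by
  rw [expMoment_zero_eq]
  exact sum_pos (fun i _ => exp_pos _) hs

lemma hasDerivAt_expMoment (m : ℕ) (x : ℝ) :
    HasDerivAt (expMoment s a m) (expMoment s a (m + 1) x) x := by
  refine HasDerivAt.fun_sum fun i _ => ?_
  have h := (((hasDerivAt_id' x).const_mul (a i)).exp).const_mul (a i ^ m)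
  rwa [mul_one, mul_left_comm, mul_comm, ← pow_succ] at h

lemma continuous_expMoment (m : ℕ) : Continuous (expMoment s a m) := by
  unfold expMoment
  fun_prop

lemma continuous_expVariance (hs : s.Nonempty) : Continuous (expVariance s a) :=
  have := continuous_expMoment (s := s) (a := a)
  Continuous.div (by fun_prop) (by fun_prop) fun x => (pow_pos (expMoment_zero_pos hs x) 2).ne'

lemma hasDerivAt_expMean (hs : s.Nonempty) (x : ℝ) :
    HasDerivAt (expMean s a) (expVariance s a x) x :=
  (hasDerivAt_expMoment 1 x).div (hasDerivAt_expMoment 0 x) (expMoment_zero_pos hs x).ne'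

lemma expVariance_nonneg (x : ℝ) : 0 ≤ expVariance s a x := by
  refine div_nonneg (sub_nonneg.2 ?_) (sq_nonneg _)
  rw [← sq, mul_comm]
  exact sum_sq_le_sum_mul_sum_of_sq_le_mul s (fun i _ => by positivity) (fun i _ => by positivity)
    fun i _ => le_of_eq (by ring)

lemma deriv_deriv_log_sum_exp (hs : s.Nonempty) :
    deriv (deriv fun x => log (∑ i ∈ s, exp (a i * x))) = expVariance s a := by
  have hF : deriv (fun x => log (∑ i ∈ s, exp (a i * x))) = expMean s a := by
    funext x
    simp only [← expMoment_zero_eq]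
    exact ((hasDerivAt_expMoment 0 x).log (expMoment_zero_pos hs x).ne').deriv
  rw [hF]
  exact funext fun x => (hasDerivAt_expMean hs x).deriv

lemma expMean_nonneg (ha : ∀ i ∈ s, 0 ≤ a i) (x : ℝ) : 0 ≤ expMean s a x :=
  div_nonneg (sum_nonneg fun i hi => by have := ha i hi; positivity)
    (sum_nonneg fun i _ => by positivity)

end LogSumExp

section NatExponents

variable (n : ℕ)

lemma one_le_expMoment_range_zero (x : ℝ) : 1 ≤ expMoment (range (n + 1)) (↑) 0 x := by
  rw [expMoment_zero_eq]
  simpa using single_le_sum (f := fun j : ℕ => exp (j * x)) (fun j _ => (exp_pos _).le)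
    (mem_range.2 n.succ_pos)

lemma expMean_range_le_of_neg {x : ℝ} (hx : x < 0) :
    expMean (range (n + 1)) (↑) x ≤ exp x / (1 - exp x) ^ 2 := by
  refine (div_le_self (sum_nonneg fun j _ => by positivity)
    (one_le_expMoment_range_zero n x)).trans ?_
  have hgeom := hasSum_coe_mul_geometric_of_norm_lt_one (r := exp x)
    (by rwa [Real.norm_of_nonneg (exp_pos x).le, Real.exp_lt_one_iff])
  refine (sum_congr rfl fun j _ => ?_).trans_le
    (sum_le_hasSum (range (n + 1)) (fun j _ => by positivity) hgeom)
  rw [pow_one, ← exp_nat_mul]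

lemma exp_mul_expMoment_range_neg (m : ℕ) (x : ℝ) :
    exp (n * x) * expMoment (range (n + 1)) (↑) m (-x) =
      ∑ j ∈ range (n + 1), ((n : ℝ) - j) ^ m * exp (j * x) := by
  rw [expMoment, mul_sum, ← sum_range_reflect]
  refine sum_congr rfl fun j hj => ?_
  have hjn : j ≤ n := Nat.lt_succ_iff.1 (mem_range.1 hj)
  rw [Nat.add_sub_cancel, Nat.cast_sub hjn, mul_left_comm, ← exp_add]
  ring_nf

lemma expMean_range_add_expMean_neg (x : ℝ) :
    expMean (range (n + 1)) (↑) x + expMean (range (n + 1)) (↑) (-x) = n := by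
  have hS : exp (n * x) * expMoment (range (n + 1)) (↑) 0 (-x) =
      expMoment (range (n + 1)) (↑) 0 x := by
    rw [exp_mul_expMoment_range_neg]
    simp only [expMoment, pow_zero]
  have hT : exp (n * x) * expMoment (range (n + 1)) (↑) 1 (-x) =
      n * expMoment (range (n + 1)) (↑) 0 x - expMoment (range (n + 1)) (↑) 1 x := by
    rw [exp_mul_expMoment_range_neg]
    simp only [expMoment, pow_one, mul_sum, ← sum_sub_distrib, sub_mul, pow_zero, one_mul]
  have hpos := expMoment_zero_pos (s := range (n + 1)) (a := (↑)) nonempty_range_add_one x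
  rw [expMean, expMean, ← mul_div_mul_left (expMoment _ _ 1 (-x)) _ (exp_pos (n * x)).ne',
    hS, hT]
  field_simp
  ring

lemma tendsto_expMean_range_div_of_neg {x : ℝ} (hx : x < 0) :
    Tendsto (fun n : ℕ => expMean (range (n + 1)) (↑) x / n) atTop (𝓝 0) :=
  squeeze_zero
    (fun n => div_nonneg (expMean_nonneg (fun j _ => Nat.cast_nonneg j) x) n.cast_nonneg)
    (fun n => div_le_div_of_nonneg_right (expMean_range_le_of_neg n hx) n.cast_nonneg)
    (tendsto_const_div_atTop_nhds_zero_nat _)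

lemma tendsto_expMean_range_div_of_pos {x : ℝ} (hx : 0 < x) :
    Tendsto (fun n : ℕ => expMean (range (n + 1)) (↑) x / n) atTop (𝓝 1) := by
  have hrefl : ∀ᶠ n : ℕ in atTop,
      1 - expMean (range (n + 1)) (↑) (-x) / n = expMean (range (n + 1)) (↑) x / n := by
    filter_upwards [eventually_ne_atTop 0] with n hn
    rw [eq_div_iff (Nat.cast_ne_zero.2 hn), sub_mul, div_mul_cancel₀ _ (Nat.cast_ne_zero.2 hn),
      ← expMean_range_add_expMean_neg n x]
    ring
  simpa using
    (tendsto_const_nhds.sub (tendsto_expMean_range_div_of_neg (neg_neg_of_pos hx))).congr' hrefl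

end NatExponents

/-- For every compactly supported continuous function `φ : ℝ → ℝ`, the limit as `n → ∞` of
`(1/n) · ∫_ℝ (d²/dx²)[log (∑_{j=0}^n e^{jx})] · φ(x) dx` equals `φ 0`. -/
theorem tendsto_integral_second_deriv_log_sum_exp_mul
    (φ : ℝ → ℝ) (hφc : Continuous φ) (hφs : HasCompactSupport φ) :
    Tendsto
      (fun n : ℕ =>
        (1 / (n : ℝ)) *
          ∫ x : ℝ,
            (deriv (deriv (fun y : ℝ =>
              Real.log (∑ j ∈ Finset.range (n + 1), Real.exp (j * y)))) x) * φ x)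
      atTop (nhds (φ 0)) := by
  have hs : ∀ n, (range (n + 1)).Nonempty := fun n => nonempty_range_add_one
  refine (tendsto_integral_mul_of_hasDerivAt (l := atTop)
    (g := fun n x => expMean (range (n + 1)) (↑) x / n)
    (k := fun n x => expVariance (range (n + 1)) (↑) x / n)
    (fun n x => (hasDerivAt_expMean (hs n) x).div_const _)
    (fun n => (continuous_expVariance (hs n)).div_const _)
    (fun n x => div_nonneg (expVariance_nonneg x) n.cast_nonneg)
    (fun _ => tendsto_expMean_range_div_of_neg) (fun _ => tendsto_expMean_range_div_of_pos)
    hφc hφs).congr fun n => ?_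
  rw [deriv_deriv_log_sum_exp (hs n), ← integral_const_mul]
  congr 1 with x
  ring
end

section
/- For every compactly supported continuous function φ : ℂ → ℝ, the limit as n → ∞ of (1/(4πn)) · ∫_ℂ (Δ H_n)(z) · φ(z) dA(z) equals (1/(2π)) · ∫_0^{2π} φ(e^{iθ}) dθ, where Δ denotes the Laplacian on ℂ ≅ ℝ² (the sum of the two second partial derivatives) and dA is Lebesgue (area) measure on ℂ. -/
/-!
Write `S_n(u) = ∑_{k ≤ n} u^k`, so that `H_n z = log S_n(|z|²)`, and let
`G_n(u) = u S_n'(u) / S_n(u)`, the mean of `k` under the weights `u^k`. For a function of `|z|²`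
one has `Δ f(|z|²) = 4 (u f'(u))'` at `u = |z|²`, so `Δ H_n = 4 G_n'(|z|²)`, and in polar
coordinates the integral against `φ` becomes `4π ∫ (d/dr) G_n(r²) ψ(r) dr`, where `ψ(r)` is the
average of `φ` over the circle of radius `r`.

`G_n` increases from `0` to `n`. For `u < 1` it is at most `∑ k u^k = u / (1 - u)²`, and the
symmetry `S_n(u) = u^n S_n(1/u)` gives `n - G_n(u) = G_n(1/u)`. So `G_n(r²) / n` tends to the
indicator of `r > 1`: the probability measures `(d/dr) G_n(r²) dr / n` concentrate at `r = 1`,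
and the normalized integrals tend to `ψ(1)`.
-/

open MeasureTheory Filter Finset Real Topology Set

theorem abs_intervalIntegral_mul_le_of_hasDerivAt_s7 {F f g : ℝ → ℝ} {u v C : ℝ} (huv : u ≤ v)
    (hF : ∀ x ∈ Icc u v, HasDerivAt F (f x) x) (hf : IntervalIntegrable f volume u v)
    (hf_nonneg : ∀ x ∈ Icc u v, 0 ≤ f x) (hg : ∀ x ∈ Icc u v, |g x| ≤ C) :
    |∫ x in u..v, f x * g x| ≤ C * (F v - F u) := by
  have hbound : ∀ x ∈ Icc u v, ‖f x * g x‖ ≤ C * f x := fun x hx => by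
    rw [norm_mul, Real.norm_of_nonneg (hf_nonneg x hx), mul_comm C]
    exact mul_le_mul_of_nonneg_left (hg x hx) (hf_nonneg x hx)
  calc |∫ x in u..v, f x * g x|
      ≤ ∫ x in u..v, C * f x :=
        intervalIntegral.norm_integral_le_of_norm_le huv
          (ae_of_all _ fun x hx => hbound x (Ioc_subset_Icc_self hx)) (hf.const_mul C)
    _ = C * (F v - F u) := by
        rw [intervalIntegral.integral_const_mul,
          intervalIntegral.integral_eq_sub_of_hasDerivAt (by rwa [Set.uIcc_of_le huv]) hf]

theorem abs_intervalIntegral_mul_le_of_split {F f g : ℝ → ℝ} {a b c d M η : ℝ}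
    (hac : a ≤ c) (hcd : c ≤ d) (hdb : d ≤ b)
    (hF : ∀ x ∈ Icc a b, HasDerivAt F (f x) x) (hf : IntervalIntegrable f volume a b)
    (hf_nonneg : ∀ x ∈ Icc a b, 0 ≤ f x) (hg : ContinuousOn g (Icc a b))
    (hM : ∀ x ∈ Icc a b, |g x| ≤ M) (hη : ∀ x ∈ Icc c d, |g x| ≤ η) :
    |∫ x in a..b, f x * g x| ≤ M * (F c - F a) + η * (F d - F c) + M * (F b - F d) := by
  have hint : ∀ {u v}, a ≤ u → u ≤ v → v ≤ b →
      IntervalIntegrable (fun x => f x * g x) volume u v := by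
    intro u v hu huv hv
    have hsub : uIcc u v ⊆ uIcc a b := by
      rw [Set.uIcc_of_le huv, Set.uIcc_of_le (hu.trans (huv.trans hv))]
      exact Icc_subset_Icc hu hv
    exact (hf.mono_set hsub).mul_continuousOn (hg.mono (hsub.trans (Set.uIcc_of_le
      (hu.trans (huv.trans hv))).subset))
  have piece : ∀ {u v C}, a ≤ u → u ≤ v → v ≤ b → (∀ x ∈ Icc u v, |g x| ≤ C) →
      |∫ x in u..v, f x * g x| ≤ C * (F v - F u) := by
    intro u v C hu huv hv hC
    have hsub : Icc u v ⊆ Icc a b := Icc_subset_Icc hu hv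
    refine abs_intervalIntegral_mul_le_of_hasDerivAt_s7 huv (fun x hx => hF x (hsub hx)) ?_
      (fun x hx => hf_nonneg x (hsub hx)) hC
    exact hf.mono_set (by rwa [Set.uIcc_of_le huv, Set.uIcc_of_le (hu.trans (huv.trans hv))])
  have hdb' : c ≤ b := hcd.trans hdb
  rw [← intervalIntegral.integral_add_adjacent_intervals
      ((hint le_rfl hac hdb').trans (hint hac hcd hdb)) (hint (hac.trans hcd) hdb le_rfl),
    ← intervalIntegral.integral_add_adjacent_intervals (hint le_rfl hac hdb') (hint hac hcd hdb)]
  refine (abs_add_le _ _).trans (add_le_add ((abs_add_le _ _).trans (add_le_add ?_ ?_)) ?_)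
  · exact piece le_rfl hac hdb' fun x hx => hM x (Icc_subset_Icc le_rfl hdb' hx)
  · exact piece hac hcd hdb hη
  · exact piece (hac.trans hcd) hdb le_rfl fun x hx =>
      hM x (Icc_subset_Icc (hac.trans hcd) le_rfl hx)

section PeakingSequence

variable {ι : Type*} {l : Filter ι} {F f : ι → ℝ → ℝ} {ψ : ℝ → ℝ} {a b x₀ : ℝ}

theorem tendsto_intervalIntegral_mul_zero_of_tendsto_step (hx₀ : x₀ ∈ Ioo a b)
    (hF : ∀ i, ∀ x ∈ Icc a b, HasDerivAt (F i) (f i x) x)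
    (hf : ∀ i, IntervalIntegrable (f i) volume a b)
    (hf_nonneg : ∀ i, ∀ x ∈ Icc a b, 0 ≤ f i x)
    (h_below : ∀ x ∈ Ioo a x₀, Tendsto (fun i => F i x - F i a) l (𝓝 0))
    (h_above : ∀ x ∈ Ioc x₀ b, Tendsto (fun i => F i x - F i a) l (𝓝 1))
    (hψ : ContinuousOn ψ (Icc a b)) (hψx₀ : ψ x₀ = 0) :
    Tendsto (fun i => ∫ x in a..b, f i x * ψ x) l (𝓝 0) := by
  rw [Metric.tendsto_nhds]
  intro ε hε
  obtain ⟨M, hM⟩ := isCompact_Icc.exists_bound_of_continuousOn hψ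
  obtain ⟨δ, hδ, hψδ⟩ := Metric.continuousWithinAt_iff.mp (hψ x₀ (Ioo_subset_Icc_self hx₀))
    (ε / 2) (half_pos hε)
  set c := max ((a + x₀) / 2) (x₀ - δ / 2)
  set d := min ((x₀ + b) / 2) (x₀ + δ / 2)
  have hc : c ∈ Ioo a x₀ := ⟨by linarith [le_max_left ((a + x₀) / 2) (x₀ - δ / 2), hx₀.1],
    max_lt (by linarith [hx₀.1]) (by linarith)⟩
  have hd : d ∈ Ioc x₀ b := ⟨lt_min (by linarith [hx₀.2]) (by linarith),
    by linarith [min_le_left ((x₀ + b) / 2) (x₀ + δ / 2), hx₀.2]⟩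
  have hnear : ∀ x ∈ Icc c d, |ψ x| ≤ ε / 2 := fun x hx => by
    have hxab : x ∈ Icc a b := ⟨hc.1.le.trans hx.1, hx.2.trans hd.2⟩
    have hdist : dist x x₀ < δ := by
      rw [Real.dist_eq, abs_lt]
      constructor
      · linarith [le_max_right ((a + x₀) / 2) (x₀ - δ / 2), hx.1]
      · linarith [min_le_right ((x₀ + b) / 2) (x₀ + δ / 2), hx.2]
    simpa [hψx₀, Real.dist_eq] using (hψδ hxab hdist).le
  have hlim : Tendsto (fun i => M * (F i c - F i a) + ε / 2 * (F i d - F i c)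
      + M * (F i b - F i d)) l (𝓝 (M * 0 + ε / 2 * (1 - 0) + M * (1 - 1))) := by
    have hc' := h_below c hc
    have hd' := h_above d hd
    have hb' := h_above b ⟨hx₀.2, le_rfl⟩
    refine ((hc'.const_mul M).add ((hd'.sub hc').const_mul _)).add ((hb'.sub hd').const_mul M)
      |>.congr fun i => ?_
    ring
  filter_upwards [hlim.eventually_lt_const (show _ < ε by linarith)] with i hi
  rw [Real.dist_eq, sub_zero]
  refine lt_of_le_of_lt ?_ hi
  exact abs_intervalIntegral_mul_le_of_split hc.1.le (hc.2.trans hd.1).le hd.2 (hF i) (hf i)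
    (hf_nonneg i) hψ (fun x hx => by simpa using hM x hx) hnear

theorem tendsto_intervalIntegral_mul_of_tendsto_step (hx₀ : x₀ ∈ Ioo a b)
    (hF : ∀ i, ∀ x ∈ Icc a b, HasDerivAt (F i) (f i x) x)
    (hf : ∀ i, IntervalIntegrable (f i) volume a b)
    (hf_nonneg : ∀ i, ∀ x ∈ Icc a b, 0 ≤ f i x)
    (h_below : ∀ x ∈ Ioo a x₀, Tendsto (fun i => F i x - F i a) l (𝓝 0))
    (h_above : ∀ x ∈ Ioc x₀ b, Tendsto (fun i => F i x - F i a) l (𝓝 1))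
    (hψ : ContinuousOn ψ (Icc a b)) :
    Tendsto (fun i => ∫ x in a..b, f i x * ψ x) l (𝓝 (ψ x₀)) := by
  have hab : uIcc a b = Icc a b := Set.uIcc_of_le (hx₀.1.trans hx₀.2).le
  have hsplit : ∀ i, ∫ x in a..b, f i x * ψ x
      = (∫ x in a..b, f i x * (ψ x - ψ x₀)) + ψ x₀ * (F i b - F i a) := fun i => by
    simp only [mul_sub]
    rw [intervalIntegral.integral_sub ((hf i).mul_continuousOn (hab ▸ hψ)) ((hf i).mul_const _),
      intervalIntegral.integral_mul_const,
      intervalIntegral.integral_eq_sub_of_hasDerivAt (hab ▸ hF i) (hf i)]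
    ring
  have hlim := tendsto_intervalIntegral_mul_zero_of_tendsto_step hx₀ hF hf hf_nonneg h_below
    h_above (hψ.sub continuousOn_const) (sub_self (ψ x₀))
  simpa [hsplit] using hlim.add ((h_above b ⟨hx₀.2, le_rfl⟩).const_mul (ψ x₀))

end PeakingSequence

theorem Complex.polarCoord_symm_eq_circleMap (p : ℝ × ℝ) :
    Complex.polarCoord.symm p = circleMap 0 p.1 p.2 := by
  rw [Complex.polarCoord_symm_apply, circleMap_zero, Complex.exp_mul_I]
  push_cast
  ring

theorem integral_comp_circleMap_neg_pi_pi (φ : ℂ → ℝ) (r : ℝ) :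
    ∫ θ in -π..π, φ (circleMap 0 r θ) = 2 * π * circleAverage φ 0 r := by
  rw [circleAverage_eq_integral_add (-π), smul_eq_mul, ← mul_assoc,
    mul_inv_cancel₀ (by positivity), one_mul,
    intervalIntegral.integral_comp_add_right (fun θ => φ (circleMap 0 r θ))]
  ring_nf

theorem integral_norm_mul_eq_integral_circleAverage {F : ℝ → ℝ} (hF : Continuous F)
    {φ : ℂ → ℝ} (hφ : Continuous φ) {R : ℝ} (hR : 0 ≤ R) (hφR : ∀ z, R < ‖z‖ → φ z = 0) :
    ∫ z : ℂ, F ‖z‖ * φ z = 2 * π * ∫ r in 0..R, r * F r * circleAverage φ 0 r := by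
  set g : ℝ × ℝ → ℝ := fun p => p.1 * F p.1 * φ (circleMap 0 p.1 p.2)
  have hg : Continuous g := by fun_prop
  have hg_zero : ∀ p : ℝ × ℝ, R < p.1 → g p = 0 := fun p hp => by
    have hnorm : R < ‖circleMap 0 p.1 p.2‖ := by
      rwa [norm_circleMap_zero, abs_of_pos (hR.trans_lt hp)]
    simp only [g, hφR _ hnorm, mul_zero]
  have hg_int : IntegrableOn g (Ioi (0 : ℝ) ×ˢ Ioo (-π) π) := by
    refine IntegrableOn.of_forall_sdiff_eq_zero
      (hg.continuousOn.integrableOn_compact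
        ((isCompact_Icc (a := 0) (b := R)).prod (isCompact_Icc (a := -π) (b := π))))
      (measurableSet_Ioi.prod measurableSet_Ioo) fun p hp => hg_zero p ?_
    by_contra! h
    exact hp.2 ⟨⟨hp.1.1.out.le, h⟩, Ioo_subset_Icc_self hp.1.2⟩
  calc ∫ z : ℂ, F ‖z‖ * φ z
      = ∫ p in Ioi (0 : ℝ) ×ˢ Ioo (-π) π, g p := by
        rw [← Complex.integral_comp_polarCoord_symm]
        refine setIntegral_congr_fun (measurableSet_Ioi.prod measurableSet_Ioo) fun p hp => ?_
        simp only [g, Complex.polarCoord_symm_eq_circleMap, norm_circleMap_zero,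
          abs_of_pos (show 0 < p.1 from hp.1), smul_eq_mul]
        ring
    _ = ∫ r in Ioi (0 : ℝ), r * F r * (2 * π * circleAverage φ 0 r) := by
        rw [Measure.volume_eq_prod, setIntegral_prod _ hg_int]
        refine setIntegral_congr_fun measurableSet_Ioi fun r _ => ?_
        rw [← integral_comp_circleMap_neg_pi_pi,
          intervalIntegral.integral_of_le (by linarith [pi_pos]),
          ← integral_Ioc_eq_integral_Ioo, ← integral_const_mul]
    _ = 2 * π * ∫ r in 0..R, r * F r * circleAverage φ 0 r := by
        rw [intervalIntegral.integral_of_le hR, ← integral_const_mul,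
          ← setIntegral_eq_of_subset_of_forall_sdiff_eq_zero measurableSet_Ioi Ioc_subset_Ioi_self]
        · exact setIntegral_congr_fun measurableSet_Ioi fun r _ => by ring
        · intro r hr
          have hRr : R < r := lt_of_not_ge fun h => hr.2 ⟨hr.1, h⟩
          rw [circleAverage_const_on_circle fun z hz => hφR z ?_, mul_zero, mul_zero]
          rwa [mem_sphere_zero_iff_norm.mp hz, abs_of_pos (hR.trans_lt hRr)]

theorem iteratedDeriv_two_comp_sq_add {f f' f'' : ℝ → ℝ} {c : ℝ}
    (hf : ∀ u ≥ c, HasDerivAt f (f' u) u) (hf' : ∀ u ≥ c, HasDerivAt f' (f'' u) u) (t : ℝ) :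
    iteratedDeriv 2 (fun x => f (x ^ 2 + c)) t
      = 2 * f' (t ^ 2 + c) + 4 * t ^ 2 * f'' (t ^ 2 + c) := by
  have hsq : ∀ x : ℝ, HasDerivAt (fun x => x ^ 2 + c) (2 * x) x := fun x => by
    simpa using (hasDerivAt_pow 2 x).add_const c
  have hge : ∀ x : ℝ, x ^ 2 + c ≥ c := fun x => le_add_of_nonneg_left (sq_nonneg x)
  have hderiv : deriv (fun x => f (x ^ 2 + c)) = fun x => f' (x ^ 2 + c) * (2 * x) :=
    funext fun x => ((hf _ (hge x)).comp x (hsq x)).deriv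
  have h2 : HasDerivAt (fun x => f' (x ^ 2 + c) * (2 * x))
      (f'' (t ^ 2 + c) * (2 * t) * (2 * t) + f' (t ^ 2 + c) * (2 * 1)) t :=
    ((hf' _ (hge t)).comp t (hsq t)).fun_mul ((hasDerivAt_id' t).const_mul 2)
  rw [iteratedDeriv_succ, iteratedDeriv_one, hderiv, h2.deriv]
  ring

theorem laplacian_comp_sq_add_sq {f f' f'' : ℝ → ℝ}
    (hf : ∀ u ≥ 0, HasDerivAt f (f' u) u) (hf' : ∀ u ≥ 0, HasDerivAt f' (f'' u) u) (x y : ℝ) :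
    iteratedDeriv 2 (fun s => f (s ^ 2 + y ^ 2)) x
        + iteratedDeriv 2 (fun t => f (x ^ 2 + t ^ 2)) y
      = 4 * (f' (x ^ 2 + y ^ 2) + (x ^ 2 + y ^ 2) * f'' (x ^ 2 + y ^ 2)) := by
  simp_rw [add_comm (x ^ 2) (_ ^ 2)]
  rw [iteratedDeriv_two_comp_sq_add (fun u hu => hf u ((sq_nonneg y).trans hu))
      (fun u hu => hf' u ((sq_nonneg y).trans hu)),
    iteratedDeriv_two_comp_sq_add (fun u hu => hf u ((sq_nonneg x).trans hu))
      (fun u hu => hf' u ((sq_nonneg x).trans hu)),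
    add_comm (y ^ 2)]
  ring

theorem hasDerivAt_sum_mul_pow (s : Finset ℕ) (c : ℕ → ℝ) (u : ℝ) :
    HasDerivAt (fun v => ∑ k ∈ s, c k * v ^ k) (∑ k ∈ s, c k * k * u ^ (k - 1)) u := by
  simpa only [mul_assoc] using
    HasDerivAt.fun_sum fun k _ => (hasDerivAt_pow k u).const_mul (c k)

theorem mul_sum_mul_pow_sub_one (s : Finset ℕ) (c : ℕ → ℝ) (u : ℝ) :
    u * ∑ k ∈ s, c k * k * u ^ (k - 1) = ∑ k ∈ s, c k * k * u ^ k := by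
  rw [mul_sum]
  refine sum_congr rfl fun k _ => ?_
  cases k with
  | zero => simp
  | succ k => rw [Nat.add_sub_cancel, pow_succ]; ring

noncomputable def powSum (n : ℕ) (u : ℝ) : ℝ := ∑ k ∈ range (n + 1), u ^ k

noncomputable def meanExponent (n : ℕ) (u : ℝ) : ℝ :=
  (∑ k ∈ range (n + 1), k * u ^ k) / powSum n u

noncomputable def meanExponentDeriv (n : ℕ) (u : ℝ) : ℝ :=
  ((∑ k ∈ range (n + 1), k * k * u ^ (k - 1)) * powSum n u
    - (∑ k ∈ range (n + 1), k * u ^ k) * ∑ k ∈ range (n + 1), k * u ^ (k - 1)) / powSum n u ^ 2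

theorem hasDerivAt_powSum (n : ℕ) (u : ℝ) :
    HasDerivAt (powSum n) (∑ k ∈ range (n + 1), k * u ^ (k - 1)) u := by
  unfold powSum
  simpa using hasDerivAt_sum_mul_pow (range (n + 1)) 1 u

theorem one_le_powSum (n : ℕ) {u : ℝ} (hu : 0 ≤ u) : 1 ≤ powSum n u := by
  rw [powSum, sum_range_succ']
  simpa using sum_nonneg fun k _ => pow_nonneg hu (k + 1)

theorem powSum_pos (n : ℕ) {u : ℝ} (hu : 0 ≤ u) : 0 < powSum n u :=
  zero_lt_one.trans_le (one_le_powSum n hu)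

theorem hasDerivAt_meanExponent (n : ℕ) {u : ℝ} (hu : 0 ≤ u) :
    HasDerivAt (meanExponent n) (meanExponentDeriv n u) u := by
  have hT := hasDerivAt_sum_mul_pow (range (n + 1)) (↑) u
  exact hT.div (hasDerivAt_powSum n u) (powSum_pos n hu).ne'

theorem meanExponentDeriv_nonneg (n : ℕ) {u : ℝ} (hu : 0 < u) : 0 ≤ meanExponentDeriv n u := by
  have hS := powSum_pos n hu.le
  -- `u` times the numerator is the variance of `k` under the weights `u ^ k`.
  have hcs : (∑ k ∈ range (n + 1), (k : ℝ) * u ^ k) ^ 2 / powSum n u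
      ≤ ∑ k ∈ range (n + 1), ((k : ℝ) * u ^ k) ^ 2 / u ^ k :=
    sq_sum_div_le_sum_sq_div _ _ fun k _ => pow_pos hu k
  have hvar : (∑ k ∈ range (n + 1), (k : ℝ) * u ^ k) ^ 2
      ≤ (∑ k ∈ range (n + 1), k * k * u ^ k) * powSum n u := by
    have hsq : ∀ k ∈ range (n + 1), ((k : ℝ) * u ^ k) ^ 2 / u ^ k = k * k * u ^ k :=
      fun k _ => by field_simp [(pow_pos hu k).ne']
    rwa [sum_congr rfl hsq, div_le_iff₀ hS] at hcs
  have hT := mul_sum_mul_pow_sub_one (range (n + 1)) (↑) u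
  have hS' := mul_sum_mul_pow_sub_one (range (n + 1)) 1 u
  simp only [Pi.one_apply, one_mul] at hS'
  have hnum : 0 ≤ u * ((∑ k ∈ range (n + 1), (k : ℝ) * k * u ^ (k - 1)) * powSum n u
      - (∑ k ∈ range (n + 1), (k : ℝ) * u ^ k) * ∑ k ∈ range (n + 1), (k : ℝ) * u ^ (k - 1)) := by
    rw [mul_sub, ← mul_assoc, hT, mul_left_comm, hS']
    nlinarith
  exact div_nonneg ((mul_nonneg_iff_of_pos_left hu).mp hnum) (sq_nonneg _)

theorem continuous_meanExponentDeriv_sq (n : ℕ) :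
    Continuous fun r : ℝ => meanExponentDeriv n (r ^ 2) := by
  unfold meanExponentDeriv powSum
  exact Continuous.div (by fun_prop) (by fun_prop) fun r =>
    pow_ne_zero 2 (powSum_pos n (sq_nonneg r)).ne'

theorem meanExponent_nonneg (n : ℕ) {u : ℝ} (hu : 0 ≤ u) : 0 ≤ meanExponent n u :=
  div_nonneg (sum_nonneg fun k _ => by positivity) (powSum_pos n hu).le

theorem meanExponent_le_of_lt_one (n : ℕ) {u : ℝ} (hu₀ : 0 ≤ u) (hu₁ : u < 1) :
    meanExponent n u ≤ u / (1 - u) ^ 2 := by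
  have hsum : HasSum (fun k : ℕ => (k : ℝ) * u ^ k) (u / (1 - u) ^ 2) :=
    hasSum_coe_mul_geometric_of_norm_lt_one (by rwa [norm_of_nonneg hu₀])
  calc meanExponent n u ≤ ∑ k ∈ range (n + 1), (k : ℝ) * u ^ k :=
        div_le_self (sum_nonneg fun k _ => by positivity) (one_le_powSum n hu₀)
    _ ≤ u / (1 - u) ^ 2 := sum_le_hasSum _ (fun k _ => by positivity) hsum

theorem sub_meanExponent_eq_meanExponent_inv (n : ℕ) {u : ℝ} (hu : 0 < u) :
    n - meanExponent n u = meanExponent n u⁻¹ := by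
  have hS := powSum_pos n hu.le
  have hreflect : ∀ c : ℕ → ℝ, ∑ k ∈ range (n + 1), c k * u ^ k
      = u ^ n * ∑ k ∈ range (n + 1), c (n - k) * u⁻¹ ^ k := fun c => by
    rw [← sum_range_reflect, mul_sum]
    refine sum_congr rfl fun k hk => ?_
    have hk : k ≤ n := Nat.lt_succ_iff.mp (mem_range.mp hk)
    rw [Nat.add_sub_cancel, inv_pow, mul_left_comm, ← pow_sub₀ _ hu.ne' hk]
  have hden : powSum n u = u ^ n * powSum n u⁻¹ := by
    simpa [powSum] using hreflect 1
  have hnum : ∑ k ∈ range (n + 1), (k : ℝ) * u ^ k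
      = u ^ n * (n * powSum n u⁻¹ - ∑ k ∈ range (n + 1), (k : ℝ) * u⁻¹ ^ k) := by
    rw [hreflect]
    congr 1
    rw [powSum, mul_sum, ← sum_sub_distrib]
    refine sum_congr rfl fun k hk => ?_
    rw [Nat.cast_sub (Nat.lt_succ_iff.mp (mem_range.mp hk))]
    ring
  have hS' := (powSum_pos n (inv_pos.mpr hu).le).ne'
  rw [meanExponent, meanExponent, hnum, hden, mul_div_mul_left _ _ (pow_ne_zero n hu.ne'),
    sub_div, mul_div_cancel_right₀ _ hS', sub_sub_cancel]

theorem tendsto_meanExponent_div_of_lt_one {u : ℝ} (hu₀ : 0 ≤ u) (hu₁ : u < 1) :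
    Tendsto (fun n : ℕ => meanExponent n u / n) atTop (𝓝 0) :=
  squeeze_zero (fun n => div_nonneg (meanExponent_nonneg n hu₀) n.cast_nonneg)
    (fun n => div_le_div_of_nonneg_right (meanExponent_le_of_lt_one n hu₀ hu₁) n.cast_nonneg)
    (tendsto_const_div_atTop_nhds_zero_nat _)

theorem tendsto_meanExponent_div_of_one_lt {u : ℝ} (hu : 1 < u) :
    Tendsto (fun n : ℕ => meanExponent n u / n) atTop (𝓝 1) := by
  have h := (tendsto_meanExponent_div_of_lt_one (inv_nonneg.mpr (zero_le_one.trans hu.le))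
    (inv_lt_one_of_one_lt₀ hu)).const_sub 1
  rw [sub_zero] at h
  refine h.congr' ((eventually_ne_atTop 0).mono fun n hn => ?_)
  rw [← sub_meanExponent_eq_meanExponent_inv n (zero_lt_one.trans hu)]
  field_simp
  ring

theorem hasDerivAt_meanExponent_sq (n : ℕ) (r : ℝ) :
    HasDerivAt (fun r => meanExponent n (r ^ 2)) (2 * r * meanExponentDeriv n (r ^ 2)) r := by
  refine ((hasDerivAt_meanExponent n (sq_nonneg r)).comp (h := fun x : ℝ => x ^ 2) r
    (hasDerivAt_pow 2 r)).congr_deriv ?_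
  norm_num
  ring

theorem meanExponent_zero (n : ℕ) : meanExponent n 0 = 0 := by
  rw [meanExponent, sum_eq_zero fun k _ => by rcases k with _ | k <;> simp, zero_div]

theorem laplacian_log_sum_norm_pow (n : ℕ) (z : ℂ) :
    iteratedDeriv 2 (fun x : ℝ => Real.log
        (∑ k ∈ Finset.range (n + 1), ‖(⟨x, z.im⟩ : ℂ)‖ ^ (2 * k))) z.re
      + iteratedDeriv 2 (fun y : ℝ => Real.log
        (∑ k ∈ Finset.range (n + 1), ‖(⟨z.re, y⟩ : ℂ)‖ ^ (2 * k))) z.im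
      = 4 * meanExponentDeriv n (‖z‖ ^ 2) := by
  have hsum : ∀ x y : ℝ,
      ∑ k ∈ range (n + 1), ‖(⟨x, y⟩ : ℂ)‖ ^ (2 * k) = powSum n (x ^ 2 + y ^ 2) :=
    fun x y => by simp only [powSum, pow_mul, Complex.sq_norm, Complex.normSq_mk, ← sq]
  set f' : ℝ → ℝ := fun u => (∑ k ∈ range (n + 1), k * u ^ (k - 1)) / powSum n u
  have hf : ∀ u ≥ 0, HasDerivAt (fun u => Real.log (powSum n u)) (f' u) u := fun u hu =>
    (hasDerivAt_powSum n u).log (powSum_pos n hu).ne'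
  have hf' : ∀ u ≥ 0, HasDerivAt f' (deriv f' u) u := fun u hu =>
    ((by fun_prop : DifferentiableAt ℝ
      (fun u : ℝ => ∑ k ∈ range (n + 1), (k : ℝ) * u ^ (k - 1)) u).div
        (hasDerivAt_powSum n u).differentiableAt (powSum_pos n hu).ne').hasDerivAt
  have hmean : (fun u => u * f' u) = meanExponent n := funext fun u => by
    have h := mul_sum_mul_pow_sub_one (range (n + 1)) 1 u
    simp only [Pi.one_apply, one_mul] at h
    rw [meanExponent, ← mul_div_assoc, h]
  -- `f' + u f''` is the derivative of `u f'(u) = G_n(u)`, given by the quotient rule.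
  have hderiv : ∀ u ≥ 0, f' u + u * deriv f' u = meanExponentDeriv n u := fun u hu => by
    have h := (hasDerivAt_id' u).fun_mul (hf' u hu)
    rw [hmean] at h
    simpa using h.unique (hasDerivAt_meanExponent n hu)
  simp_rw [hsum]
  rw [laplacian_comp_sq_add_sq hf hf', hderiv _ (by positivity), Complex.sq_norm,
    Complex.normSq_apply]
  ring_nf

theorem tendsto_integral_meanExponentDeriv_mul {ψ : ℝ → ℝ} (hψ : Continuous ψ) {R : ℝ}
    (hR : 1 < R) :
    Tendsto (fun n : ℕ => ∫ r in 0..R, 2 * r * meanExponentDeriv n (r ^ 2) / n * ψ r) atTop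
      (𝓝 (ψ 1)) := by
  have hcont : ∀ n, Continuous fun r : ℝ => 2 * r * meanExponentDeriv n (r ^ 2) / n := fun n =>
    ((continuous_const.mul continuous_id).mul (continuous_meanExponentDeriv_sq n)).div_const _
  refine tendsto_intervalIntegral_mul_of_tendsto_step (F := fun n r => meanExponent n (r ^ 2) / n)
    ⟨zero_lt_one, hR⟩ (fun n r _ => (hasDerivAt_meanExponent_sq n r).div_const _)
    (fun n => (hcont n).intervalIntegrable _ _) (fun n r hr => ?_) (fun x hx => ?_)
    (fun x hx => ?_) hψ.continuousOn
  · rcases hr.1.eq_or_lt with rfl | hr₀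
    · simp
    · have := meanExponentDeriv_nonneg n (pow_pos hr₀ 2)
      positivity
  · simpa [meanExponent_zero] using
      tendsto_meanExponent_div_of_lt_one (sq_nonneg x) (by nlinarith [hx.1, hx.2])
  · simpa [meanExponent_zero] using
      tendsto_meanExponent_div_of_one_lt (by nlinarith [hx.1] : 1 < x ^ 2)

/-- For every compactly supported continuous `φ : ℂ → ℝ`, the limit as `n → ∞` of
`(1/(4πn)) · ∫_ℂ (Δ H_n)(z) · φ(z) dA(z)` equals `(1/(2π)) · ∫_0^{2π} φ(e^{iθ}) dθ`,
where `H_n(z) = log (∑_{k=0}^n |z|^{2k})` and `Δ` is the sum of the two second partial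
derivatives on `ℂ ≅ ℝ²`. -/
theorem tendsto_integral_laplacian_log_sum_abs_pow
    (φ : ℂ → ℝ) (hφc : Continuous φ) (hφs : HasCompactSupport φ) :
    Tendsto
      (fun n : ℕ =>
        (1 / (4 * Real.pi * (n : ℝ))) *
          ∫ z : ℂ,
            (iteratedDeriv 2
                (fun x : ℝ => Real.log
                  (∑ k ∈ Finset.range (n + 1), ‖(⟨x, z.im⟩ : ℂ)‖ ^ (2 * k)))
                z.re +
             iteratedDeriv 2
                (fun y : ℝ => Real.log
                  (∑ k ∈ Finset.range (n + 1), ‖(⟨z.re, y⟩ : ℂ)‖ ^ (2 * k)))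
                z.im) * φ z)
      atTop
      (nhds ((1 / (2 * Real.pi)) *
        ∫ θ in (0 : ℝ)..(2 * Real.pi), φ (Complex.exp (θ * Complex.I)))) := by
  obtain ⟨R, hR, hφR⟩ : ∃ R, 1 < R ∧ ∀ z : ℂ, R < ‖z‖ → φ z = 0 := by
    obtain ⟨R, hR⟩ := hφs.isCompact.isBounded.subset_closedBall 0
    refine ⟨max R 2, by simp, fun z hz => image_eq_zero_of_notMem_tsupport fun hmem => ?_⟩
    linarith [le_max_left R 2, mem_closedBall_zero_iff.mp (hR hmem)]
  have hcircle : 1 / (2 * π) * ∫ θ in (0 : ℝ)..2 * π, φ (Complex.exp (θ * Complex.I))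
      = circleAverage φ 0 1 := by
    simp [circleAverage_def, circleMap_zero]
  have hpolar : ∀ n : ℕ, ∫ z : ℂ, 4 * meanExponentDeriv n (‖z‖ ^ 2) * φ z
      = 2 * π * ∫ r in 0..R, r * (4 * meanExponentDeriv n (r ^ 2)) * circleAverage φ 0 r :=
    fun n => integral_norm_mul_eq_integral_circleAverage
      ((continuous_meanExponentDeriv_sq n).const_mul 4) hφc (zero_le_one.trans hR.le) hφR
  simp_rw [laplacian_log_sum_norm_pow, hpolar, hcircle]
  refine (tendsto_integral_meanExponentDeriv_mul hφc.circleAverage hR).congr' ?_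
  filter_upwards [eventually_ne_atTop 0] with n hn
  rw [← mul_assoc, ← intervalIntegral.integral_const_mul]
  refine intervalIntegral.integral_congr fun r _ => ?_
  field_simp
end

section
/- For every real r₀ > 0, the limit as n → ∞ of (1/n) · g_n'(r₀) equals Ξ(r₀), where g_n' is the derivative of g_n(r) = log(∑_{k=0}^n r^{2k}) and Ξ(x) = 2/x if x > 1, Ξ(x) = 1 if x = 1, and Ξ(x) = 0 if x < 1. -/
open Filter Finset Real Topology

/-!
With `x = r ^ 2`, one has `r * g_n'(r) = 2 * m_n(x)`, where `m_n(x)` is the mean of `k` under the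
weights `x ^ k` on `{0, …, n}`. Up to the factor `x ^ n`, the weights of `x⁻¹` are those of `x` in
reverse order, so `m_n(x) + m_n(x⁻¹) = n`. For `x < 1` the mean stays below `∑' k, k * x ^ k`, hence
`m_n(x) / n → 0`; by the symmetry, `m_n(x) / n → 1` for `x > 1`, and `m_n(1) = n / 2`.
-/

section Field

variable {K : Type*} [Field K]

lemma pow_mul_sum_range_succ_inv_pow (f : ℕ → K) {x : K} (hx : x ≠ 0) (n : ℕ) :
    x ^ n * ∑ k ∈ range (n + 1), f k * x⁻¹ ^ k = ∑ k ∈ range (n + 1), f (n - k) * x ^ k := by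
  conv_rhs => rw [← sum_range_reflect]
  rw [mul_sum]
  refine sum_congr rfl fun k hk => ?_
  have hk : k ≤ n := Nat.lt_succ_iff.mp (mem_range.mp hk)
  rw [Nat.add_sub_cancel, Nat.sub_sub_self hk, pow_sub₀ x hx hk, inv_pow]
  ring

def truncGeomMean (n : ℕ) (x : K) : K :=
  (∑ k ∈ range (n + 1), (k : K) * x ^ k) / ∑ k ∈ range (n + 1), x ^ k

lemma truncGeomMean_add_inv {x : K} (hx : x ≠ 0) {n : ℕ} (hD : ∑ k ∈ range (n + 1), x ^ k ≠ 0) :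
    truncGeomMean n x + truncGeomMean n x⁻¹ = n := by
  have hP := pow_mul_sum_range_succ_inv_pow (fun k => (k : K)) hx n
  have hW := pow_mul_sum_range_succ_inv_pow (fun _ => (1 : K)) hx n
  simp only [one_mul] at hW
  have hP' : ∑ k ∈ range (n + 1), ((n - k : ℕ) : K) * x ^ k
      = n * ∑ k ∈ range (n + 1), x ^ k - ∑ k ∈ range (n + 1), (k : K) * x ^ k := by
    rw [mul_sum, ← sum_sub_distrib]
    refine sum_congr rfl fun k hk => ?_
    rw [Nat.cast_sub (Nat.lt_succ_iff.mp (mem_range.mp hk))]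
    ring
  unfold truncGeomMean
  rw [← mul_div_mul_left (∑ k ∈ range (n + 1), (k : K) * x⁻¹ ^ k) _ (pow_ne_zero n hx), hP, hW,
    hP']
  field_simp
  ring

end Field

lemma sum_range_succ_pow_pos {x : ℝ} (hx : 0 ≤ x) (n : ℕ) : 0 < ∑ k ∈ range (n + 1), x ^ k :=
  geom_sum_pos hx n.succ_ne_zero

lemma truncGeomMean_nonneg {x : ℝ} (hx : 0 ≤ x) (n : ℕ) : 0 ≤ truncGeomMean n x :=
  div_nonneg (sum_nonneg fun k _ => by positivity) (sum_range_succ_pow_pos hx n).le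

lemma truncGeomMean_le_tsum {x : ℝ} (hx₀ : 0 ≤ x) (hx₁ : x < 1) (n : ℕ) :
    truncGeomMean n x ≤ ∑' k : ℕ, k * x ^ k := by
  have hsum : Summable fun k : ℕ => (k : ℝ) * x ^ k := by
    simpa using summable_pow_mul_geometric_of_norm_lt_one 1 (r := x) (by rwa [norm_of_nonneg hx₀])
  have hW : 1 ≤ ∑ k ∈ range (n + 1), x ^ k := by
    simpa using single_le_sum (fun k _ => pow_nonneg hx₀ k) (mem_range.mpr n.succ_pos)
  calc truncGeomMean n x ≤ ∑ k ∈ range (n + 1), (k : ℝ) * x ^ k :=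
        div_le_self (sum_nonneg fun k _ => by positivity) hW
    _ ≤ ∑' k : ℕ, k * x ^ k := hsum.sum_le_tsum _ fun k _ => by positivity

lemma tendsto_truncGeomMean_div_atTop_of_lt_one {x : ℝ} (hx₀ : 0 ≤ x) (hx₁ : x < 1) :
    Tendsto (fun n : ℕ => truncGeomMean n x / n) atTop (𝓝 0) :=
  squeeze_zero (fun n => div_nonneg (truncGeomMean_nonneg hx₀ n) n.cast_nonneg)
    (fun n => div_le_div_of_nonneg_right (truncGeomMean_le_tsum hx₀ hx₁ n) n.cast_nonneg)
    (tendsto_const_div_atTop_nhds_zero_nat _)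

lemma truncGeomMean_one (n : ℕ) : truncGeomMean n (1 : ℝ) = n / 2 := by
  have h := truncGeomMean_add_inv one_ne_zero (sum_range_succ_pow_pos zero_le_one n).ne'
  rw [inv_one] at h
  linarith

lemma tendsto_truncGeomMean_one_div_atTop :
    Tendsto (fun n : ℕ => truncGeomMean n (1 : ℝ) / n) atTop (𝓝 (1 / 2)) := by
  refine tendsto_const_nhds.congr' ?_
  filter_upwards [eventually_ne_atTop 0] with n hn
  rw [truncGeomMean_one]
  field_simp

lemma tendsto_truncGeomMean_div_atTop_of_one_lt {x : ℝ} (hx : 1 < x) :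
    Tendsto (fun n : ℕ => truncGeomMean n x / n) atTop (𝓝 1) := by
  have hx₀ : 0 < x := one_pos.trans hx
  have h := (tendsto_truncGeomMean_div_atTop_of_lt_one (inv_nonneg.mpr hx₀.le)
    (inv_lt_one_of_one_lt₀ hx)).const_sub 1
  rw [sub_zero] at h
  refine h.congr' ?_
  filter_upwards [eventually_ne_atTop 0] with n hn
  rw [eq_sub_of_add_eq (truncGeomMean_add_inv hx₀.ne' (sum_range_succ_pow_pos hx₀.le n).ne')]
  field_simp

lemma hasDerivAt_sum_range_succ_pow_two_mul {𝕜 : Type*} [NontriviallyNormedField 𝕜] (n : ℕ)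
    {r : 𝕜} (hr : r ≠ 0) :
    HasDerivAt (fun r => ∑ k ∈ range (n + 1), r ^ (2 * k))
      (2 / r * ∑ k ∈ range (n + 1), (k : 𝕜) * (r ^ 2) ^ k) r := by
  rw [mul_sum]
  refine HasDerivAt.fun_sum fun k _ => (hasDerivAt_pow (2 * k) r).congr_deriv ?_
  rcases eq_or_ne k 0 with rfl | hk
  · simp
  · rw [← pow_mul, ← mul_pow_sub_one (by omega : 2 * k ≠ 0) r]
    field_simp
    push_cast
    ring

lemma deriv_log_sum_range_succ_pow_two_mul (n : ℕ) {r : ℝ} (hr : r ≠ 0) :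
    deriv (fun r => log (∑ k ∈ range (n + 1), r ^ (2 * k))) r
      = 2 / r * truncGeomMean n (r ^ 2) := by
  have hW : ∑ k ∈ range (n + 1), r ^ (2 * k) = ∑ k ∈ range (n + 1), (r ^ 2) ^ k := by
    simp only [pow_mul]
  have hpos := sum_range_succ_pow_pos (sq_nonneg r) n
  rw [((hasDerivAt_sum_range_succ_pow_two_mul n hr).log (hW ▸ hpos.ne')).deriv, hW,
    truncGeomMean, mul_div_assoc]

/-- For every real `r₀ > 0`, the limit as `n → ∞` of `(1/n) · g_n'(r₀)` equals `Ξ(r₀)`,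
where `g_n(r) = log (∑_{k=0}^n r^{2k})` and `Ξ(x) = 2/x` for `x > 1`, `Ξ(1) = 1`, and
`Ξ(x) = 0` for `x < 1`. -/
theorem tendsto_one_div_n_deriv_log_sum_pow (r₀ : ℝ) (hr₀ : 0 < r₀) :
    Tendsto
      (fun n : ℕ =>
        (1 / (n : ℝ)) *
          deriv (fun r : ℝ => Real.log (∑ k ∈ Finset.range (n + 1), r ^ (2 * k))) r₀)
      atTop
      (nhds (if 1 < r₀ then 2 / r₀ else if r₀ = 1 then 1 else 0)) := by
  have hderiv : ∀ n : ℕ, 2 / r₀ * (truncGeomMean n (r₀ ^ 2) / n) = (1 / (n : ℝ)) *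
      deriv (fun r : ℝ => Real.log (∑ k ∈ Finset.range (n + 1), r ^ (2 * k))) r₀ := by
    intro n
    rw [deriv_log_sum_range_succ_pow_two_mul n hr₀.ne']
    ring
  refine Tendsto.congr hderiv ?_
  rcases lt_trichotomy r₀ 1 with h | rfl | h
  · rw [if_neg h.not_gt, if_neg h.ne]
    simpa using (tendsto_truncGeomMean_div_atTop_of_lt_one (sq_nonneg r₀)
      (pow_lt_one₀ hr₀.le h two_ne_zero)).const_mul (2 / r₀)
  · simpa using tendsto_truncGeomMean_one_div_atTop.const_mul 2
  · rw [if_pos h]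
    simpa using
      (tendsto_truncGeomMean_div_atTop_of_one_lt (one_lt_pow₀ h two_ne_zero)).const_mul (2 / r₀)
end
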